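/- For positive integers b_1 < b_2 < ... < b_n and real numbers a_1 > a_2 > ... > a_n with a_i > b_n - 1 for all i, the matrix (1/(a_i)_{b_j})_{i,j=1}^n, where (x)_k = x(x-1)···(x-k+1), has strictly positive determinant. -/

import Mathlib

/-- The falling factorial `(x)_k = x (x-1) ⋯ (x-k+1)` of a real number. -/
noncomputable def ffact (x : ℝ) (k : ℕ) : ℝ := ∏ i ∈ Finset.range k, (x - (i : ℝ))

open Finset

lemma zeroCount : ∀ (m : ℕ) (e : Fin m → ℕ), StrictMono e → ∀ (c r : Fin m → ℝ),
    StrictMono r → (∀ i, 0 < r i) → (∀ i, ∑ j, c j * r i ^ e j = 0) → ∀ j, c j = 0 := by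
  intro m
  induction m with
  | zero => exact fun e _ c r _ _ _ j => j.elim0
  | succ m ih =>
    intro e he c r hr hrpos hroot
    have he0 : ∀ j : Fin (m+1), e 0 ≤ e j := fun j => he.monotone (Fin.zero_le j)
    set g : ℝ → ℝ := fun x => ∑ j, c j * x ^ (e j - e 0) with hgdef
    have hg0 : ∀ i, g (r i) = 0 := by
      intro i
      have hp : (0:ℝ) < (r i) ^ (e 0) := pow_pos (hrpos i) _
      have key : (r i) ^ (e 0) * g (r i) = ∑ j, c j * r i ^ e j := by
        rw [hgdef, Finset.mul_sum]
        refine Finset.sum_congr rfl fun j _ => ?_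
        rw [show (r i)^(e 0) * (c j * r i ^ (e j - e 0)) = c j * ((r i)^(e 0) * r i ^ (e j - e 0)) by ring,
          ← pow_add, Nat.add_sub_cancel' (he0 j)]
      have := key.trans (hroot i)
      rcases mul_eq_zero.1 this with h | h
      · exact absurd h (ne_of_gt hp)
      · exact h
    have hderiv : ∀ x : ℝ, HasDerivAt g (∑ j, c j * (((e j - e 0 : ℕ)) * x ^ (e j - e 0 - 1))) x := by
      intro x
      exact HasDerivAt.fun_sum fun j _ => (hasDerivAt_pow (e j - e 0) x).const_mul (c j)
    -- Rolle
    have hs : ∀ i : Fin m, ∃ x, x ∈ Set.Ioo (r i.castSucc) (r i.succ) ∧ deriv g x = 0 := by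
      intro i
      have hlt : r i.castSucc < r i.succ := hr Fin.castSucc_lt_succ
      obtain ⟨x, hx, hdx⟩ := exists_deriv_eq_zero hlt
        (Continuous.continuousOn (by
          have : Continuous g := by
            apply continuous_finset_sum
            exact fun j _ => continuous_const.mul (continuous_pow _)
          exact this))
        ((hg0 i.castSucc).trans (hg0 i.succ).symm)
      exact ⟨x, hx, hdx⟩
    choose s hsmem hszero using hs
    have hsmono : StrictMono s := by
      intro i i' hii
      calc s i < r i.succ := (hsmem i).2
        _ ≤ r i'.castSucc := hr.monotone (by
            rw [Fin.le_def, Fin.coe_castSucc, Fin.val_succ]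
            exact Fin.lt_iff_val_lt_val.mp hii)
        _ < s i' := (hsmem i').1
    have hspos : ∀ i, 0 < s i := fun i => lt_trans (hrpos i.castSucc) (hsmem i).1
    have hzero' : ∀ i : Fin m, ∑ j : Fin m, (c j.succ * ((e j.succ - e 0 : ℕ))) * (s i) ^ (e j.succ - e 0 - 1) = 0 := by
      intro i
      have hd := (hderiv (s i)).deriv
      rw [hszero i] at hd
      have : (0:ℝ) = ∑ j : Fin (m+1), c j * (((e j - e 0 : ℕ)) * (s i) ^ (e j - e 0 - 1)) := hd.symm ▸ rfl
      rw [Fin.sum_univ_succ] at this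
      simp only [Nat.sub_self, Nat.cast_zero, zero_mul, mul_zero, zero_add] at this
      rw [← this.symm]
      exact Finset.sum_congr rfl fun j _ => by ring
    have hcsucc : ∀ j : Fin m, c j.succ = 0 := by
      intro j
      have heM : StrictMono (fun j : Fin m => e j.succ - e 0 - 1) := by
        intro j j' hjj
        have h1 : e j.succ < e j'.succ := he (by simpa using hjj)
        have h2 : e 0 < e j.succ := he (Fin.succ_pos j)
        simp only
        omega
      have := ih (fun j => e j.succ - e 0 - 1) heM
        (fun j => c j.succ * ((e j.succ - e 0 : ℕ))) s hsmono hspos hzero' j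
      have hne : ((e j.succ - e 0 : ℕ) : ℝ) ≠ 0 := by
        have h2 : e 0 < e j.succ := he (Fin.succ_pos j)
        exact_mod_cast Nat.sub_ne_zero_of_lt h2
      exact (mul_eq_zero.1 this).resolve_right hne
    intro j
    rcases Fin.eq_zero_or_eq_succ j with rfl | ⟨j', rfl⟩
    · have h0 := hroot 0
      rw [Fin.sum_univ_succ] at h0
      simp only [hcsucc, zero_mul, Finset.sum_const_zero, add_zero] at h0
      have hp : (0:ℝ) < (r 0) ^ (e 0) := pow_pos (hrpos 0) _
      exact (mul_eq_zero.1 h0).resolve_right (ne_of_gt hp)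
    · exact hcsucc j'

lemma gvPos : ∀ (m : ℕ) (y : Fin m → ℝ), StrictMono y → (∀ i, 0 < y i) → ∀ (e : Fin m → ℕ),
    StrictMono e → 0 < (Matrix.of fun i j => y i ^ e j).det := by
  intro m
  induction m with
  | zero => intro y _ _ e _; simp [Matrix.det_fin_zero]
  | succ m ih =>
    intro y hy hypos e he
    set A : ℝ → Matrix (Fin (m+1)) (Fin (m+1)) ℝ := fun x =>
      Matrix.of fun i j => (Fin.lastCases x (fun i : Fin m => y i.castSucc) i) ^ e j with hA
    set cc : Fin (m+1) → ℝ := fun j => (-1) ^ ((Fin.last m : ℕ) + (j:ℕ)) *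
      ((Matrix.of fun (k : Fin m) (l : Fin m) =>
        y k.castSucc ^ e ((j : Fin (m+1)).succAbove l)).det) with hcc
    have hAexp : ∀ x, (A x).det = ∑ j, cc j * x ^ e j := by
      intro x
      rw [Matrix.det_succ_row (A x) (Fin.last m)]
      refine Finset.sum_congr rfl fun j _ => ?_
      have h1 : A x (Fin.last m) j = x ^ e j := by simp [hA]
      have h2 : ((A x).submatrix (Fin.last m).succAbove j.succAbove) =
          Matrix.of fun (k : Fin m) (l : Fin m) => y k.castSucc ^ e (j.succAbove l) := by
        ext k l
        simp [hA, Matrix.submatrix, Fin.succAbove_last]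
      rw [h1, h2, hcc]; ring
    have hAself : A (y (Fin.last m)) = Matrix.of fun i j => y i ^ e j := by
      ext i j
      refine Fin.lastCases ?_ ?_ i
      · simp [hA]
      · intro k; simp [hA]
    have hcclast : 0 < cc (Fin.last m) := by
      rw [hcc]
      have h3 : ((Fin.last m : Fin (m+1))).succAbove = Fin.castSucc := Fin.succAbove_last
      simp only [h3]
      have := ih (fun i => y i.castSucc) (fun i i' h => hy (by simpa using h))
        (fun i => hypos i.castSucc) (fun l => e l.castSucc) (fun l l' h => he (by simpa using h))
      rw [Fin.val_last, ← two_mul, pow_mul, neg_one_sq, one_pow, one_mul]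
      exact this
    -- roots at y i.castSucc
    have hroots : ∀ i : Fin m, (A (y i.castSucc)).det = 0 := by
      intro i
      apply Matrix.det_zero_of_row_eq (i := i.castSucc) (j := Fin.last m)
        (Fin.ne_of_lt (Fin.castSucc_lt_last i))
      ext j
      simp [hA]
    by_contra hcon
    push_neg at hcon
    rw [← hAself] at hcon
    -- find x1 > y last with f x1 > 0
    set x0 := y (Fin.last m) with hx0
    set f : ℝ → ℝ := fun x => (A x).det with hf
    have hfx0 : f x0 ≤ 0 := hcon
    have hx0pos : 0 < x0 := hypos _
    have hxi : ∃ x1, x0 < x1 ∧ 0 < f x1 := by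
      rcases Nat.eq_zero_or_pos m with rfl | hm
      · exfalso
        have : f x0 = cc (Fin.last 0) * x0 ^ e (Fin.last 0) := by
          show (A x0).det = _
          rw [hAexp]; simp
        nlinarith [pow_pos hx0pos (e (Fin.last 0)), hcclast]
      · set S : ℝ := ∑ j : Fin m, |cc j.castSucc| with hS
        set E := e (Fin.last m) with hE
        have hE1 : 1 ≤ E := by
          have : e (Fin.castSucc ⟨0, hm⟩) < e (Fin.last m) :=
            he (Fin.castSucc_lt_last _)
          omega
        set x1 := max (x0 + 1) (max 1 ((S + 1) / cc (Fin.last m))) with hx1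
        refine ⟨x1, lt_of_lt_of_le (by linarith) (le_max_left _ _), ?_⟩
        have hx11 : (1:ℝ) ≤ x1 := le_trans (le_max_left _ _) (le_max_right _ _)
        have hx1pos : (0:ℝ) < x1 := lt_of_lt_of_le one_pos hx11
        have hclx : S + 1 ≤ cc (Fin.last m) * x1 := by
          have h4 : (S + 1) / cc (Fin.last m) ≤ x1 :=
            le_trans (le_max_right _ _) (le_max_right _ _)
          rw [div_le_iff₀ hcclast] at h4
          linarith [h4]
        have hsum : f x1 = cc (Fin.last m) * x1 ^ E + ∑ j : Fin m, cc j.castSucc * x1 ^ e j.castSucc := by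
          show (A x1).det = _
          rw [hAexp, Fin.sum_univ_castSucc]; ring
        have hbound : ∀ j : Fin m, -( |cc j.castSucc| * x1 ^ (E - 1)) ≤ cc j.castSucc * x1 ^ e j.castSucc := by
          intro j
          have h5 : x1 ^ e j.castSucc ≤ x1 ^ (E - 1) := by
            apply pow_le_pow_right₀ hx11
            have : e j.castSucc < E := he (Fin.castSucc_lt_last j)
            omega
          have h6 : 0 < x1 ^ e j.castSucc := pow_pos hx1pos _
          rcases le_or_gt 0 (cc j.castSucc) with h | h
          · have : 0 ≤ cc j.castSucc * x1 ^ e j.castSucc := mul_nonneg h h6.le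
            have h7 : 0 ≤ |cc j.castSucc| * x1 ^ (E-1) :=
              mul_nonneg (abs_nonneg _) (pow_pos hx1pos _).le
            linarith
          · rw [abs_of_neg h]
            nlinarith [h5, h6, pow_pos hx1pos (E-1)]
        have hsumb : -(S * x1 ^ (E-1)) ≤ ∑ j : Fin m, cc j.castSucc * x1 ^ e j.castSucc := by
          rw [hS, Finset.sum_mul, ← Finset.sum_neg_distrib]
          exact Finset.sum_le_sum fun j _ => hbound j
        have hEpow : x1 ^ E = x1 ^ (E - 1) * x1 := by
          rw [← pow_succ]
          congr 1
          omega
        have hpEpos : 0 < x1 ^ (E-1) := pow_pos hx1pos _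
        rw [hsum]
        have : cc (Fin.last m) * x1 ^ E ≥ (S + 1) * x1 ^ (E-1) := by
          rw [hEpow, ← mul_assoc]
          calc (S+1) * x1^(E-1) = x1^(E-1) * (S+1) := by ring
          _ ≤ x1^(E-1) * (cc (Fin.last m) * x1) := by
              exact mul_le_mul_of_nonneg_left hclx hpEpos.le
          _ = cc (Fin.last m) * x1 ^ (E-1) * x1 := by ring
        nlinarith [hsumb, hpEpos]
    obtain ⟨x1, hx01, hfx1⟩ := hxi
    have hcont : Continuous f := by
      have : f = fun x => ∑ j, cc j * x ^ e j := funext hAexp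
      rw [this]
      exact continuous_finset_sum _ fun j _ => continuous_const.mul (continuous_pow _)
    obtain ⟨ξ, hξmem, hξ⟩ : ∃ ξ ∈ Set.Icc x0 x1, f ξ = 0 := by
      have := intermediate_value_Icc hx01.le hcont.continuousOn
      have h0 : (0:ℝ) ∈ Set.Icc (f x0) (f x1) := ⟨hfx0, hfx1.le⟩
      obtain ⟨ξ, h1, h2⟩ := this h0
      exact ⟨ξ, h1, h2⟩
    -- roots vector
    set rv : Fin (m+1) → ℝ := fun k => Fin.lastCases ξ (fun i : Fin m => y i.castSucc) k with hrv
    have hrvmono : StrictMono rv := by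
      have hrvc : ∀ i : Fin m, rv i.castSucc = y i.castSucc := fun i => by simp [hrv]
      have hrvl : rv (Fin.last m) = ξ := by simp [hrv]
      intro k k' hkk
      rcases Fin.eq_castSucc_or_eq_last k' with ⟨i', rfl⟩ | rfl
      · rcases Fin.eq_castSucc_or_eq_last k with ⟨i, rfl⟩ | rfl
        · rw [hrvc, hrvc]; exact hy hkk
        · exact absurd hkk (by simp [Fin.lt_iff_val_lt_val])
      · rcases Fin.eq_castSucc_or_eq_last k with ⟨i, rfl⟩ | rfl
        · rw [hrvc, hrvl]
          calc y i.castSucc < x0 := hy (Fin.castSucc_lt_last i)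
            _ ≤ ξ := hξmem.1
        · exact absurd hkk (lt_irrefl _)
    have hrvpos : ∀ k, 0 < rv k := by
      intro k
      refine Fin.lastCases ?_ ?_ k
      · simp only [hrv, Fin.lastCases_last]
        exact lt_of_lt_of_le hx0pos hξmem.1
      · intro i; simpa [hrv] using hypos i.castSucc
    have hrvroot : ∀ k, ∑ j, cc j * rv k ^ e j = 0 := by
      intro k
      refine Fin.lastCases ?_ ?_ k
      · rw [show rv (Fin.last m) = ξ by simp [hrv], ← hAexp]
        exact hξ
      · intro i
        rw [show rv i.castSucc = y i.castSucc by simp [hrv], ← hAexp]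
        exact hroots i
    have := zeroCount (m+1) e he cc rv hrvmono hrvpos hrvroot (Fin.last m)
    exact absurd this (ne_of_gt hcclast)

def PosMinors {m s : ℕ} (Y : Matrix (Fin m) (Fin s) ℝ) : Prop :=
  ∀ C : Fin m → Fin s, StrictMono C → 0 < (Y.submatrix id C).det

lemma colOp {m s : ℕ} (Y : Matrix (Fin m) (Fin s) ℝ) (hY : PosMinors Y)
    (u : ℝ) (hu : 0 ≤ u) (p q : Fin s) (hpq : (p:ℕ) + 1 = (q:ℕ)) :
    PosMinors (Matrix.of fun i e => if e = q then Y i e + u * Y i p else Y i e) := by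
  intro C hC
  have hCinj : Function.Injective C := hC.injective
  have hpq' : p ≠ q := by
    intro h; rw [h] at hpq; omega
  by_cases hq : ∃ j0, C j0 = q
  · obtain ⟨j0, hj0⟩ := hq
    have hM : ((Matrix.of fun i e => if e = q then Y i e + u * Y i p else Y i e).submatrix id C) =
        Matrix.updateCol (Y.submatrix id C) j0 (fun i => Y i q + u * Y i p) := by
      ext i j
      by_cases hj : j = j0
      · subst hj
        rw [Matrix.submatrix_apply, Matrix.updateCol_self]
        simp [hj0]
      · have hCj : C j ≠ q := fun h => hj (hCinj (h.trans hj0.symm))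
        simp [Matrix.updateCol_ne hj, hCj]
    rw [hM]
    have hsplit : (fun i => Y i q + u * Y i p) = (fun i => Y i q) + (u • fun i => Y i p) := by
      funext i; simp [Pi.add_apply]
    rw [hsplit, Matrix.det_updateCol_add, Matrix.det_updateCol_smul]
    have h1 : Matrix.updateCol (Y.submatrix id C) j0 (fun i => Y i q) = Y.submatrix id C := by
      have : (fun i => Y i q) = fun i => (Y.submatrix id C) i j0 := by
        funext i; simp [hj0]
      rw [this, Matrix.updateCol_eq_self]
    rw [h1]
    by_cases hp : ∃ j1, C j1 = p
    · obtain ⟨j1, hj1⟩ := hp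
      have hne : j0 ≠ j1 := by
        intro h; exact hpq' (by rw [← hj1, ← h, hj0])
      have hzero : (Matrix.updateCol (Y.submatrix id C) j0 (fun i => Y i p)).det = 0 := by
        apply Matrix.det_zero_of_column_eq hne
        intro k
        rw [Matrix.updateCol_self, Matrix.updateCol_ne hne.symm]
        simp [hj1]
      rw [hzero, mul_zero, add_zero]
      exact hY C hC
    · push_neg at hp
      set C' := Function.update C j0 p with hC'def
      have hC' : StrictMono C' := by
        intro j j' hjj
        have hne : j ≠ j' := ne_of_lt hjj
        rw [Fin.lt_iff_val_lt_val]
        by_cases h1 : j = j0 <;> by_cases h2 : j' = j0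
        · exact absurd (h1.trans h2.symm) hne
        · subst h1
          rw [hC'def]
          rw [Function.update_self, Function.update_of_ne h2]
          have : q < C j' := hj0 ▸ hC hjj
          have := Fin.lt_iff_val_lt_val.mp this
          omega
        · subst h2
          rw [hC'def, Function.update_self, Function.update_of_ne h1]
          have : C j < q := hj0 ▸ hC hjj
          have h3 := Fin.lt_iff_val_lt_val.mp this
          have h4 : C j ≠ p := hp j
          have h5 : (C j : ℕ) ≠ (p:ℕ) := fun h => h4 (Fin.ext h)
          omega
        · rw [hC'def, Function.update_of_ne h1, Function.update_of_ne h2]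
          exact Fin.lt_iff_val_lt_val.mp (hC hjj)
      have h2 : Matrix.updateCol (Y.submatrix id C) j0 (fun i => Y i p) = Y.submatrix id C' := by
        ext i j
        by_cases hj : j = j0
        · subst hj; simp [hC'def, Function.update_self]
        · simp [Matrix.updateCol_ne hj, hC'def, Function.update_of_ne hj]
      rw [h2]
      have ha := hY C hC
      have hb := hY C' hC'
      nlinarith
  · push_neg at hq
    have : ((Matrix.of fun i e => if e = q then Y i e + u * Y i p else Y i e).submatrix id C) =
        Y.submatrix id C := by
      ext i j
      simp [hq j]
    rw [this]
    exact hY C hC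

noncomputable def rfac (x : ℝ) (k : ℕ) : ℝ := ∏ t ∈ Finset.range k, (x + t)

lemma rfac_pos {x : ℝ} (hx : 0 < x) (k : ℕ) : 0 < rfac x k := by
  apply Finset.prod_pos
  intro t _
  positivity

lemma rfac_succ (x : ℝ) (r : ℕ) : rfac x (r+1) = rfac x r * (x + r) :=
  Finset.prod_range_succ _ _

noncomputable def Vmat {m : ℕ} (N : ℕ) (y : Fin m → ℝ) (r : ℕ) :
    Matrix (Fin m) (Fin (N+1)) ℝ :=
  Matrix.of fun i e => if (e:ℕ) ≤ r then rfac (y i) e else rfac (y i) r * y i ^ ((e:ℕ) - r)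

lemma vmat_pos {m N : ℕ} (y : Fin m → ℝ) (hy : StrictMono y) (hypos : ∀ i, 0 < y i) :
    ∀ r : ℕ, PosMinors (Vmat N y r) := by
  have base : PosMinors (Vmat N y 0) := by
    intro C hC
    have : (Vmat N y 0).submatrix id C = Matrix.of fun i j => y i ^ ((C j : ℕ)) := by
      ext i j
      simp only [Vmat, Matrix.submatrix_apply, Matrix.of_apply, id_eq]
      rcases Nat.eq_zero_or_pos (C j : ℕ) with h | h
      · simp [h, rfac]
      · rw [if_neg (by omega)]
        simp [rfac]
    rw [this]
    exact gvPos m y hy hypos (fun j => (C j : ℕ)) (fun j j' h => Fin.lt_iff_val_lt_val.mp (hC h))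
  intro r
  induction r with
  | zero => exact base
  | succ r ihr =>
    -- intermediate matrices
    set W : ℕ → Matrix (Fin m) (Fin (N+1)) ℝ := fun e0 =>
      Matrix.of fun i e => if e0 ≤ (e:ℕ) then Vmat N y (r+1) i e else Vmat N y r i e with hW
    have hWtop : W (N+1) = Vmat N y r := by
      ext i e
      rw [hW]
      simp only [Matrix.of_apply]
      rw [if_neg (by omega)]
    have hWbot : W 0 = Vmat N y (r+1) := by
      ext i e
      rw [hW]
      simp only [Matrix.of_apply]
      rw [if_pos (by omega)]
    have hstep : ∀ e0 : ℕ, PosMinors (W (e0+1)) → PosMinors (W e0) := by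
      intro e0 hpos
      by_cases hle : e0 ≤ r
      · have : W e0 = W (e0+1) := by
          ext i e
          rw [hW]
          simp only [Matrix.of_apply]
          by_cases h : e0+1 ≤ (e:ℕ)
          · rw [if_pos (by omega), if_pos h]
          · rw [if_neg h]
            by_cases h2 : e0 ≤ (e:ℕ)
            · rw [if_pos h2]
              have he : (e:ℕ) = e0 := by omega
              simp only [Vmat, Matrix.of_apply]
              rw [if_pos (by omega), if_pos (by omega)]
            · rw [if_neg h2]
        rw [this]; exact hpos
      · push_neg at hle
        by_cases hN : e0 ≤ N
        swap
        · have : W e0 = W (e0+1) := by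
            ext i e
            rw [hW]
            simp only [Matrix.of_apply]
            rw [if_neg (by omega), if_neg (by omega)]
          rw [this]; exact hpos
        · have he01 : 1 ≤ e0 := by omega
          set p : Fin (N+1) := ⟨e0 - 1, by omega⟩ with hp
          set q : Fin (N+1) := ⟨e0, by omega⟩ with hq
          have key : W e0 = Matrix.of fun i e =>
              if e = q then W (e0+1) i e + (r:ℝ) * W (e0+1) i p else W (e0+1) i e := by
            ext i e
            simp only [Matrix.of_apply]
            by_cases he : e = q
            · subst he
              have hqv : (q:ℕ) = e0 := rfl
              have hpv : (p:ℕ) = e0 - 1 := rfl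
              rw [if_pos rfl, hW]
              simp only [Matrix.of_apply]
              rw [if_pos (show e0 ≤ (q:ℕ) by rw [hqv]),
                if_neg (show ¬ (e0+1 ≤ (q:ℕ)) by rw [hqv]; omega),
                if_neg (show ¬ (e0+1 ≤ (p:ℕ)) by rw [hpv]; omega)]
              have hVp : Vmat N y r i p = rfac (y i) r * y i ^ (e0-r-1) := by
                simp only [Vmat, Matrix.of_apply, hpv]
                by_cases hpr : e0 - 1 ≤ r
                · rw [if_pos hpr, show e0 - 1 = r by omega, show e0-r-1 = 0 by omega,
                    pow_zero, mul_one]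
                · rw [if_neg hpr, show e0 - 1 - r = e0 - r - 1 by omega]
              have hVq : Vmat N y r i q = rfac (y i) r * y i ^ (e0-r) := by
                simp only [Vmat, Matrix.of_apply, hqv]
                rw [if_neg (by omega)]
              have hVq1 : Vmat N y (r+1) i q = rfac (y i) (r+1) * y i ^ (e0-r-1) := by
                simp only [Vmat, Matrix.of_apply, hqv]
                by_cases hc : e0 ≤ r+1
                · rw [if_pos hc, show e0 = r+1 by omega, show r+1-r-1 = 0 by omega,
                    pow_zero, mul_one]
                · rw [if_neg hc, show e0 - (r+1) = e0 - r - 1 by omega]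
              rw [show e0 - r = (e0-r-1)+1 from by omega] at hVq
              rw [hVq1, hVq, hVp, rfac_succ, pow_succ]
              ring
            · rw [if_neg he, hW]
              simp only [Matrix.of_apply]
              have hnev : ((e:ℕ)) ≠ e0 := fun h => he (by rw [hq]; exact Fin.ext h)
              by_cases h : e0 ≤ (e:ℕ)
              · rw [if_pos (by omega), if_pos (by omega)]
              · rw [if_neg h, if_neg (by omega)]
          rw [key]
          exact colOp (W (e0+1)) hpos (r:ℝ) (by positivity) p q (show (e0-1) + 1 = e0 by omega)
    have main : ∀ t, t ≤ N+1 → PosMinors (W (N+1-t)) := by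
      intro t
      induction t with
      | zero => intro _; simpa [hWtop] using ihr
      | succ t iht =>
        intro ht
        have h1 : N+1-(t+1)+1 = N+1-t := by omega
        have := hstep (N+1-(t+1))
        rw [h1] at this
        exact this (iht (by omega))
    have := main (N+1) (le_refl _)
    simpa [hWbot] using this

lemma ffact_split (x : ℝ) {k B : ℕ} (hk : k ≤ B) :
    ffact x B = ffact x k * rfac (x - B + 1) (B - k) := by
  obtain ⟨d, rfl⟩ : ∃ d, B = k + d := ⟨B - k, by omega⟩
  rw [ffact, ffact, rfac, Finset.prod_range_add, Nat.add_sub_cancel_left]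
  congr 1
  have hrefl := Finset.prod_range_reflect (fun t => x - ((k + d : ℕ):ℝ) + 1 + t) d
  rw [← hrefl]
  apply Finset.prod_congr rfl
  intro j hj
  simp only [Finset.mem_range] at hj
  have hc : ((d - 1 - j : ℕ):ℝ) = (d:ℝ) - 1 - (j:ℝ) := by
    have h2 : d - 1 - j = d - (j+1) := by omega
    rw [h2, Nat.cast_sub (by omega)]
    push_cast; ring
  rw [hc]
  push_cast
  ring

lemma ffact_pos {x : ℝ} {B : ℕ} (hx : (B:ℝ) - 1 < x) (k : ℕ) (hk : k ≤ B) :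
    0 < ffact x k := by
  apply Finset.prod_pos
  intro t ht
  simp only [Finset.mem_range] at ht
  have : (t:ℝ) ≤ (B:ℝ) - 1 := by
    have : (t:ℕ) + 1 ≤ B := by omega
    have := Nat.cast_le (α := ℝ).mpr this
    push_cast at this
    linarith
  linarith

/-- For positive integers `b_1 < ⋯ < b_n` and reals `a_1 > ⋯ > a_n` with
`a_i > b_n - 1`, the matrix `(1/(a_i)_{b_j})` has strictly positive determinant. -/
theorem stmt19 (n : ℕ) (a : Fin (n + 1) → ℝ) (b : Fin (n + 1) → ℕ)
    (ha : StrictAnti a) (hb : StrictMono b) (hbpos : ∀ j, 0 < b j)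
    (hab : ∀ i, ((b (Fin.last n) : ℝ)) - 1 < a i) :
    0 < (Matrix.of fun i j : Fin (n + 1) => (ffact (a i) (b j))⁻¹).det := by
  set B := b (Fin.last n) with hB
  have hbB : ∀ j, b j ≤ B := fun j => hb.monotone (Fin.le_last j)
  set y : Fin (n+1) → ℝ := fun i => a (Fin.rev i) - B + 1 with hy
  have hymono : StrictMono y := by
    intro i i' hii
    have : Fin.rev i' < Fin.rev i := by
      rw [Fin.rev_lt_rev]; exact hii
    have := ha this
    simp only [hy]
    linarith
  have hypos : ∀ i, 0 < y i := by
    intro i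
    have := hab (Fin.rev i)
    simp only [hy]
    linarith
  set C : Fin (n+1) → Fin (B+1) := fun j => ⟨B - b (Fin.rev j), by omega⟩ with hC
  have hCmono : StrictMono C := by
    intro j j' hjj
    have h1 : Fin.rev j' < Fin.rev j := by rw [Fin.rev_lt_rev]; exact hjj
    have h2 : b (Fin.rev j') < b (Fin.rev j) := hb h1
    have h3 := hbB (Fin.rev j)
    exact Fin.mk_lt_mk.mpr (by omega)
  have hpos := vmat_pos (N := B) y hymono hypos B C hCmono
  -- identify submatrix
  have hsub : (Vmat B y B).submatrix id C =
      Matrix.of fun i j => rfac (y i) (B - b (Fin.rev j)) := by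
    ext i j
    simp only [Vmat, Matrix.submatrix_apply, Matrix.of_apply, id_eq]
    rw [if_pos (show ((C j : ℕ)) ≤ B from by show B - b (Fin.rev j) ≤ B; omega)]
  rw [hsub] at hpos
  -- rewrite the original matrix
  have hentry : ∀ i j, (ffact (a i) (b j))⁻¹ =
      (ffact (a i) B)⁻¹ * rfac (a i - B + 1) (B - b j) := by
    intro i j
    have hsplit := ffact_split (a i) (hbB j)
    have hrf : 0 < rfac (a i - B + 1) (B - b j) := by
      apply rfac_pos
      have := hab i
      linarith
    rw [hsplit, mul_inv, mul_assoc, inv_mul_cancel₀ (ne_of_gt hrf), mul_one]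
  have hmat : (Matrix.of fun i j : Fin (n + 1) => (ffact (a i) (b j))⁻¹) =
      Matrix.of fun i j : Fin (n+1) =>
        (ffact (a i) B)⁻¹ * (Matrix.of fun i j : Fin (n+1) => rfac (a i - B + 1) (B - b j)) i j := by
    ext i j
    simp only [Matrix.of_apply]
    exact hentry i j
  rw [hmat, Matrix.det_mul_column]
  have hprod : 0 < ∏ i, (ffact (a i) B)⁻¹ := by
    apply Finset.prod_pos
    intro i _
    exact inv_pos.mpr (ffact_pos (hab i) B (le_refl B))
  apply mul_pos hprod
  -- reverse rows and columns
  have hrev := Matrix.det_submatrix_equiv_self (Fin.revPerm)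
    (Matrix.of fun i j : Fin (n+1) => rfac (a i - B + 1) (B - b j))
  rw [← hrev]
  have : (Matrix.of fun i j : Fin (n+1) => rfac (a i - B + 1) (B - b j)).submatrix
      Fin.revPerm Fin.revPerm =
      Matrix.of fun i j => rfac (y i) (B - b (Fin.rev j)) := by
    ext i j
    simp only [Matrix.submatrix_apply, Matrix.of_apply, Fin.revPerm_apply, hy]
  rw [this]
  exact hpos
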